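/- Let G be a simple 3-regular graph with girth at least 5. Then for every edge xy of G one has W_1(μ_x^{1/4}, μ_y^{1/4}) ≥ 1, i.e. κ_{1/4}(x,y) ≤ 0. -/

import Mathlib

/-!
Weak Kantorovich duality: if `f u ≤ d(u, v) + f v` whenever `u ∈ supp μ_x` and `v ∈ supp μ_y`,
then `∑ f μ_x ≤ W₁(μ_x, μ_y) + ∑ f μ_y`. Take `f = 1` at `y`, `f = 0` on the two other
neighbours of `y`, and `f = 2` elsewhere. Since the girth is at least 5, the edge `xy` lies on
no triangle and no 4-cycle, so `x` and its neighbours other than `y` are at distance at least 2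
from the zeros of `f`; hence `f` satisfies the condition. For `p = 1/4` both measures are
uniform on closed neighbourhoods, and `∑ f μ_x = 7/4`, `∑ f μ_y = 3/4`.
-/

open scoped ENNReal

namespace RicciFlatCubic

variable {V : Type*}

/-- The probability measure `μ_x^p` on the vertex set: mass `p` at `x`,
mass `(1-p)/deg x` at each neighbor of `x`, and `0` elsewhere. -/
noncomputable def muMeasure (G : SimpleGraph V) [G.LocallyFinite] (p : ℝ≥0∞) (x : V) :
    V → ℝ≥0∞ := fun z =>
  haveI : DecidableEq V := Classical.decEq V
  haveI : Decidable (G.Adj x z) := Classical.dec _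
  if z = x then p
  else if G.Adj x z then (1 - p) / (G.degree x : ℝ≥0∞)
  else 0

/-- `π : V × V → [0,1]` is a transport plan from `μ₁` to `μ₂` if its marginals are `μ₁`, `μ₂`. -/
def IsTransportPlan (μ₁ μ₂ : V → ℝ≥0∞) (π : V → V → ℝ≥0∞) : Prop :=
  (∀ u v, π u v ≤ 1) ∧ (∀ u, ∑' v, π u v = μ₁ u) ∧ (∀ v, ∑' u, π u v = μ₂ v)

/-- The Wasserstein distance `W₁(μ₁, μ₂)`: the infimum over all transport plans of the
transport cost `∑ d(u,v) π(u,v)`, where `d` is the shortest-path distance in `G`. -/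
noncomputable def W1 (G : SimpleGraph V) (μ₁ μ₂ : V → ℝ≥0∞) : ℝ≥0∞ :=
  ⨅ π : {π : V → V → ℝ≥0∞ // IsTransportPlan μ₁ μ₂ π},
    ∑' q : V × V, (G.dist q.1 q.2 : ℝ≥0∞) * π.1 q.1 q.2

/-- The `p`-Ollivier-Ricci curvature `κ_p(x,y) = 1 - W₁(μ_x^p, μ_y^p)` (as a real number),
for a real idleness parameter `p`. -/
noncomputable def kappa (G : SimpleGraph V) [G.LocallyFinite] (p : ℝ) (x y : V) : ℝ :=
  1 - (W1 G (muMeasure G (ENNReal.ofReal p) x) (muMeasure G (ENNReal.ofReal p) y)).toReal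

/-- The edge `xy` lies on two 5-cycles whose vertex sets intersect exactly in `{x, y}`. -/
def TwoPentagons (G : SimpleGraph V) (x y : V) : Prop :=
  ∃ P₁ P₂ : G.Walk x x, P₁.IsCycle ∧ P₂.IsCycle ∧ P₁.length = 5 ∧ P₂.length = 5 ∧
    s(x, y) ∈ P₁.edges ∧ s(x, y) ∈ P₂.edges ∧
    {v | v ∈ P₁.support} ∩ {v | v ∈ P₂.support} = {x, y}

/-- The Petersen graph as the Kneser graph `K(5,2)`. -/
def petersen : SimpleGraph {s : Finset (Fin 5) // s.card = 2} where
  Adj a b := Disjoint a.1 b.1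
  symm := ⟨fun _ _ h => h.symm⟩
  loopless := by
    refine ⟨?_⟩
    rintro ⟨s, hs⟩ h
    rw [disjoint_self] at h
    simp only [Finset.bot_eq_empty] at h
    simp [h] at hs

/-- The Triplex: a 12-cycle on `ℤ/12ℤ` together with six chords. -/
def triplex : SimpleGraph (ZMod 12) :=
  SimpleGraph.fromRel fun i j =>
    j = i + 1 ∨ (i = 1 ∧ j = 7) ∨ (i = 2 ∧ j = 10) ∨ (i = 3 ∧ j = 8) ∨
      (i = 4 ∧ j = 12) ∨ (i = 5 ∧ j = 9) ∨ (i = 6 ∧ j = 11)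

/-- The dodecahedral graph: layer `0` is the outer 5-cycle `a`, layers `1`, `2` form the
middle 10-cycle `b₁ c₁ b₂ c₂ … b₅ c₅`, layer `3` is the inner 5-cycle `d`. -/
def dodecahedral : SimpleGraph (Fin 4 × ZMod 5) :=
  SimpleGraph.fromRel fun p q =>
    (p.1 = 0 ∧ q.1 = 0 ∧ q.2 = p.2 + 1) ∨
    (p.1 = 0 ∧ q.1 = 1 ∧ q.2 = p.2) ∨
    (p.1 = 1 ∧ q.1 = 2 ∧ q.2 = p.2) ∨
    (p.1 = 2 ∧ q.1 = 1 ∧ q.2 = p.2 + 1) ∨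
    (p.1 = 2 ∧ q.1 = 3 ∧ q.2 = p.2) ∨
    (p.1 = 3 ∧ q.1 = 3 ∧ q.2 = p.2 + 1)

/-- The half-dodecahedral graph: inner 5-cycle `y` (`Sum.inl`), outer 10-cycle `x`
(`Sum.inr`), and spokes `yᵢ ~ x_{2i-1}`. -/
def halfDodecahedral : SimpleGraph (ZMod 5 ⊕ ZMod 10) :=
  SimpleGraph.fromRel fun p q =>
    (∃ i : ZMod 5, p = Sum.inl i ∧ q = Sum.inl (i + 1)) ∨
    (∃ j : ZMod 10, p = Sum.inr j ∧ q = Sum.inr (j + 1)) ∨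
    (∃ i : ZMod 5, p = Sum.inl i ∧ q = Sum.inr (2 * (i.val : ZMod 10) - 1))

/-- The two-sided infinite path on `ℤ`. -/
def infinitePath : SimpleGraph ℤ := SimpleGraph.fromRel fun i j => j = i + 1

/-- The cycle `Cₙ` on `ℤ/nℤ`. -/
def cycleZMod (n : ℕ) : SimpleGraph (ZMod n) := SimpleGraph.fromRel fun i j => j = i + 1

noncomputable instance (v : {s : Finset (Fin 5) // s.card = 2}) :
    Fintype (petersen.neighborSet v) := (Set.toFinite _).fintype

noncomputable instance (v : ZMod 12) : Fintype (triplex.neighborSet v) :=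
  (Set.toFinite _).fintype

noncomputable instance (v : Fin 4 × ZMod 5) : Fintype (dodecahedral.neighborSet v) :=
  (Set.toFinite _).fintype

open SimpleGraph

theorem tsum_mul_le_W1_add (G : SimpleGraph V) {μ₁ μ₂ : V → ℝ≥0∞} (f : V → ℝ≥0∞)
    (hf : ∀ u v, μ₁ u ≠ 0 → μ₂ v ≠ 0 → f u ≤ G.dist u v + f v) :
    ∑' u, f u * μ₁ u ≤ W1 G μ₁ μ₂ + ∑' v, f v * μ₂ v := by
  rw [W1, ENNReal.iInf_add]
  refine le_iInf fun ⟨π, _, hπ₁, hπ₂⟩ => ?_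
  have hsupp : ∀ u v, π u v ≠ 0 → μ₁ u ≠ 0 ∧ μ₂ v ≠ 0 := fun u v h =>
    ⟨ne_bot_of_le_ne_bot h (hπ₁ u ▸ ENNReal.le_tsum v),
      ne_bot_of_le_ne_bot h (hπ₂ v ▸ ENNReal.le_tsum u)⟩
  calc ∑' u, f u * μ₁ u = ∑' q : V × V, f q.1 * π q.1 q.2 := by
        simp_rw [← hπ₁, ← ENNReal.tsum_mul_left]
        exact (ENNReal.tsum_prod (f := fun u v => f u * π u v)).symm
    _ ≤ ∑' q : V × V, (G.dist q.1 q.2 + f q.2) * π q.1 q.2 := by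
        refine ENNReal.tsum_le_tsum fun q => ?_
        rcases eq_or_ne (π q.1 q.2) 0 with h | h
        · simp [h]
        · exact mul_le_mul_left (hf _ _ (hsupp _ _ h).1 (hsupp _ _ h).2) _
    _ = ∑' q : V × V, G.dist q.1 q.2 * π q.1 q.2 + ∑' v, f v * μ₂ v := by
        simp_rw [add_mul, ENNReal.tsum_add, ← hπ₂, ← ENNReal.tsum_mul_left]
        rw [ENNReal.tsum_prod (f := fun u v => f v * π u v), ENNReal.tsum_comm]

theorem eq_or_adj_of_muMeasure_ne_zero (G : SimpleGraph V) [G.LocallyFinite] {p : ℝ≥0∞}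
    {x u : V} (h : muMeasure G p x u ≠ 0) : u = x ∨ G.Adj x u := by
  by_contra! hu
  simp [muMeasure, hu.1, hu.2] at h

theorem one_sub_inv_div_eq_inv {d : ℕ} (hd : d ≠ 0) :
    (1 - ((d : ℝ≥0∞) + 1)⁻¹) / d = ((d : ℝ≥0∞) + 1)⁻¹ := by
  have hsum : (d : ℝ≥0∞) * ((d : ℝ≥0∞) + 1)⁻¹ + ((d : ℝ≥0∞) + 1)⁻¹ = 1 := by
    rw [← add_one_mul, ENNReal.mul_inv_cancel (by simp) (by simp)]
  rw [ENNReal.sub_eq_of_eq_add (by simp) hsum.symm, mul_comm,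
    ENNReal.mul_div_cancel_right (by exact_mod_cast hd) (by simp)]

theorem tsum_mul_muMeasure (G : SimpleGraph V) [G.LocallyFinite] (f : V → ℝ≥0∞) (p : ℝ≥0∞)
    (x : V) : ∑' u, f u * muMeasure G p x u =
      f x * p + (∑ u ∈ G.neighborFinset x, f u) * ((1 - p) / G.degree x) := by
  classical
  rw [tsum_eq_sum (s := insert x (G.neighborFinset x)), Finset.sum_insert (by simp),
    Finset.sum_mul]
  · congr 1
    · simp [muMeasure]
    · refine Finset.sum_congr rfl fun u hu => ?_
      rw [mem_neighborFinset] at hu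
      simp [muMeasure, hu, hu.ne']
  · intro u hu
    simp only [Finset.mem_insert, mem_neighborFinset, not_or] at hu
    simp [muMeasure, hu.1, hu.2]

theorem egirth_le_three {G : SimpleGraph V} {a b c : V} (hab : G.Adj a b) (hbc : G.Adj b c)
    (hca : G.Adj c a) : G.egirth ≤ 3 := by
  have hcycle : (Walk.cons hab (Walk.cons hbc (Walk.cons hca Walk.nil))).IsCycle := by
    simp [Walk.isCycle_def, Walk.isTrail_def, hab.ne, hbc.ne, hca.ne, hab.ne', hca.ne',
      Sym2.eq, Sym2.rel_iff']
  exact egirth_le_length hcycle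

theorem egirth_le_four {G : SimpleGraph V} {a b c d : V} (hab : G.Adj a b) (hbc : G.Adj b c)
    (hcd : G.Adj c d) (hda : G.Adj d a) (hac : a ≠ c) (hbd : b ≠ d) : G.egirth ≤ 4 := by
  have hcycle :
      (Walk.cons hab (Walk.cons hbc (Walk.cons hcd (Walk.cons hda Walk.nil)))).IsCycle := by
    simp [Walk.isCycle_def, Walk.isTrail_def, hab.ne, hbc.ne, hcd.ne, hda.ne,
      hab.ne', hda.ne', hac, hbd, hac.symm, Sym2.eq, Sym2.rel_iff']
  exact egirth_le_length hcycle

variable {G : SimpleGraph V} {x y : V}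

theorem not_adj_of_five_le_egirth (hgirth : 5 ≤ G.egirth) (hxy : G.Adj x y) {u v : V}
    (hu : u = x ∨ G.Adj x u) (huy : u ≠ y) (hyv : G.Adj y v) (hvx : v ≠ x) : ¬ G.Adj u v := by
  intro huv
  have hshort : G.egirth ≤ 4 := by
    rcases hu with rfl | hxu
    · exact (egirth_le_three huv hyv.symm hxy.symm).trans (by norm_num)
    · exact egirth_le_four hxu huv hyv.symm hxy.symm (Ne.symm hvx) huy
  exact absurd (hgirth.trans hshort) (by norm_num)

variable (G x y) in
open Classical in
noncomputable def edgePotential (u : V) : ℝ≥0∞ :=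
  if u = y then 1 else if G.Adj y u ∧ u ≠ x then 0 else 2

theorem edgePotential_le_two (u : V) : edgePotential G x y u ≤ 2 := by
  unfold edgePotential
  split_ifs <;> norm_num

theorem edgePotential_left (hxy : G.Adj x y) : edgePotential G x y x = 2 := by
  simp [edgePotential, hxy.ne]

theorem edgePotential_right : edgePotential G x y y = 1 := by
  simp [edgePotential]

theorem edgePotential_le_dist_add (hgirth : 5 ≤ G.egirth) (hxy : G.Adj x y) {u v : V}
    (hu : u = x ∨ G.Adj x u) (hv : v = y ∨ G.Adj y v) :
    edgePotential G x y u ≤ G.dist u v + edgePotential G x y v := by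
  have hreach : G.Reachable u v := by
    have hux : G.Reachable u x := hu.elim (· ▸ .rfl) fun h => h.symm.reachable
    have hyv : G.Reachable y v := hv.elim (· ▸ .rfl) fun h => h.reachable
    exact (hux.trans hxy.reachable).trans hyv
  rcases eq_or_ne u v with rfl | huv
  · exact le_add_self
  have hdist : 1 ≤ (G.dist u v : ℝ≥0∞) := by exact_mod_cast hreach.pos_dist_of_ne huv
  rcases hv with rfl | hyv
  · rw [edgePotential_right]
    calc edgePotential G x v u ≤ 1 + 1 := (edgePotential_le_two u).trans_eq one_add_one_eq_two.symm
      _ ≤ G.dist u v + 1 := by gcongr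
  rcases eq_or_ne v x with rfl | hvx
  · rw [edgePotential_left hxy]
    exact (edgePotential_le_two u).trans le_add_self
  have hv0 : edgePotential G x y v = 0 := by simp [edgePotential, hyv.ne', hyv, hvx]
  rw [hv0, add_zero]
  unfold edgePotential
  split_ifs with huy
  · exact hdist
  · exact zero_le
  · have := hreach.one_lt_dist_of_ne_of_not_adj huv
      (not_adj_of_five_le_egirth hgirth hxy hu huy hyv hvx)
    exact_mod_cast this

theorem one_add_sum_neighborFinset_edgePotential_left [G.LocallyFinite] (hgirth : 5 ≤ G.egirth)
    (hxy : G.Adj x y) : 1 + ∑ u ∈ G.neighborFinset x, edgePotential G x y u = 2 * G.degree x := by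
  classical
  have hy : y ∈ G.neighborFinset x := (mem_neighborFinset _ _ _).2 hxy
  have hrest : ∀ u ∈ (G.neighborFinset x).erase y, edgePotential G x y u = 2 := by
    intro u hu
    rw [Finset.mem_erase, mem_neighborFinset] at hu
    have hyu : ¬ G.Adj y u := fun hyu =>
      not_adj_of_five_le_egirth hgirth hxy (Or.inl rfl) hxy.ne hyu hu.2.ne' hu.2
    simp [edgePotential, hu.1, hyu]
  rw [← Finset.add_sum_erase _ _ hy, Finset.sum_congr rfl hrest, Finset.sum_const,
    Finset.card_erase_of_mem hy, card_neighborFinset_eq_degree, edgePotential_right, nsmul_eq_mul]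
  obtain ⟨d, hd⟩ := Nat.exists_eq_add_one.2 (G.degree_pos_iff_exists_adj x |>.2 ⟨y, hxy⟩)
  rw [hd, Nat.add_sub_cancel]
  push_cast
  ring

theorem sum_neighborFinset_edgePotential_right [G.LocallyFinite] (hxy : G.Adj x y) :
    ∑ v ∈ G.neighborFinset y, edgePotential G x y v = 2 := by
  classical
  have hx : x ∈ G.neighborFinset y := (mem_neighborFinset _ _ _).2 hxy.symm
  rw [← Finset.add_sum_erase _ _ hx, edgePotential_left hxy, Finset.sum_eq_zero, add_zero]
  intro v hv
  rw [Finset.mem_erase, mem_neighborFinset] at hv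
  simp [edgePotential, hv.1, hv.2, hv.2.ne']

theorem one_le_W1 {V : Type*} (G : SimpleGraph V) [G.LocallyFinite]
    (hreg : G.IsRegularOfDegree 3) (hgirth : 5 ≤ G.egirth) (x y : V) (hxy : G.Adj x y) :
    1 ≤ W1 G (muMeasure G (1/4) x) (muMeasure G (1/4) y) := by
  have hweight : ∀ v, ((1 : ℝ≥0∞) - 1/4) / G.degree v = 1/4 := fun v => by
    have h : (1 / 4 : ℝ≥0∞) = (((3 : ℕ) : ℝ≥0∞) + 1)⁻¹ := by norm_num
    rw [hreg v, h, one_sub_inv_div_eq_inv three_ne_zero]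
  have key := tsum_mul_le_W1_add G (μ₁ := muMeasure G (1/4) x) (μ₂ := muMeasure G (1/4) y)
    (edgePotential G x y) fun u v hu hv =>
    edgePotential_le_dist_add hgirth hxy (eq_or_adj_of_muMeasure_ne_zero G hu)
      (eq_or_adj_of_muMeasure_ne_zero G hv)
  rw [tsum_mul_muMeasure, tsum_mul_muMeasure, hweight, hweight, edgePotential_left hxy,
    edgePotential_right, sum_neighborFinset_edgePotential_right hxy] at key
  have hS := one_add_sum_neighborFinset_edgePotential_left hgirth hxy
  rw [hreg x] at hS
  set S := ∑ u ∈ G.neighborFinset x, edgePotential G x y u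
  set W := W1 G (muMeasure G (1/4) x) (muMeasure G (1/4) y)
  set q : ℝ≥0∞ := 1 / 4
  have hq : 4 * q = 1 := ENNReal.mul_div_cancel (by norm_num) (by norm_num)
  refine ENNReal.le_of_add_le_add_right ENNReal.one_ne_top ?_
  calc (1 : ℝ≥0∞) + 1 = 2 * q + (1 + S) * q := by
        rw [hS, ← hq]
        push_cast
        ring
    _ = (2 * q + S * q) + q := by ring
    _ ≤ W + (1 * q + 2 * q) + q := by gcongr
    _ = W + 4 * q := by ring
    _ = W + 1 := by rw [hq]

end RicciFlatCubic
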